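/- arXiv:2408.05282 — 3 statements merged into one kernel-verified Lean document; each statement's English description precedes it below -/
import Mathlib

section
/- Let G be a 2-vertex-connected simple graph without irrelevant edges and without non-isolating 2-vertex cuts. Let (V1, V2) be a partition of V(G) such that for each i ∈ {1,2}, |Vi| ≥ 3, and if |Vi| = 3 then the induced subgraph G[Vi] is a triangle. Then there exists a matching of size 3 between V1 and V2 in G. -/
open SimpleGraph

open scoped Classical

namespace ECSS

/-! ### Generic graph notions -/

section Generic

variable {W : Type*}

/-- The number of connected components of a graph. -/
noncomputable def numComponents (Γ : SimpleGraph W) : ℕ :=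
  Nat.card Γ.ConnectedComponent

/-- Deleting the vertex set `S` increases the number of connected components. -/
def IsCutSet (Γ : SimpleGraph W) (S : Set W) : Prop :=
  numComponents Γ < numComponents (Γ.induce Sᶜ)

/-- A `k`-vertex cut: a set of `k` vertices whose deletion increases the number of
connected components. -/
def IsVertexCut (Γ : SimpleGraph W) (S : Set W) (k : ℕ) : Prop :=
  S.ncard = k ∧ IsCutSet Γ S

/-- 2-vertex-connected: connected and with no cut vertex. -/
def TwoVertexConnected (Γ : SimpleGraph W) : Prop :=
  Γ.Connected ∧ ∀ v : W, ¬ IsCutSet Γ {v}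

/-- 2-edge-connected: connected, and still connected after deleting any single edge. -/
def IsTwoEdgeConnected (Γ : SimpleGraph W) : Prop :=
  Γ.Connected ∧ ∀ e ∈ Γ.edgeSet, (Γ.deleteEdges {e}).Connected

/-- A small 3-vertex cut: deleting it leaves exactly two connected components,
one of which has at most 6 vertices. -/
def IsSmall3Cut (Γ : SimpleGraph W) (S : Set W) : Prop :=
  IsVertexCut Γ S 3 ∧ numComponents (Γ.induce Sᶜ) = 2 ∧
    ∃ c : (Γ.induce Sᶜ).ConnectedComponent, c.supp.ncard ≤ 6

/-- A large 3-vertex cut: a 3-vertex cut that is not small. -/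
def IsLarge3Cut (Γ : SimpleGraph W) (S : Set W) : Prop :=
  IsVertexCut Γ S 3 ∧ ¬ IsSmall3Cut Γ S

/-- An isolating 2-vertex cut: deleting it leaves exactly two connected components,
one of which has size 1. -/
def IsIsolating2Cut (Γ : SimpleGraph W) (S : Set W) : Prop :=
  IsVertexCut Γ S 2 ∧ numComponents (Γ.induce Sᶜ) = 2 ∧
    ∃ c : (Γ.induce Sᶜ).ConnectedComponent, c.supp.ncard = 1

/-- A non-isolating 2-vertex cut: a 2-vertex cut that is not isolating. -/
def IsNonIsolating2Cut (Γ : SimpleGraph W) (S : Set W) : Prop :=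
  IsVertexCut Γ S 2 ∧ ¬ IsIsolating2Cut Γ S

/-- An irrelevant edge `xy`: an edge such that `{x, y}` is a 2-vertex cut. -/
def IsIrrelevantEdge (Γ : SimpleGraph W) (x y : W) : Prop :=
  Γ.Adj x y ∧ IsVertexCut Γ {x, y} 2

/-- A matching of size `k` between `V1` and `V2`: `k` pairwise vertex-disjoint edges,
each with one endpoint in `V1` and the other in `V2`. -/
def HasMatchingBetween (Γ : SimpleGraph W) (V1 V2 : Set W) (k : ℕ) : Prop :=
  ∃ f g : Fin k → W,
    (∀ i, f i ∈ V1 ∧ g i ∈ V2 ∧ Γ.Adj (f i) (g i)) ∧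
    ∀ i j, i ≠ j → f i ≠ f j ∧ g i ≠ g j ∧ f i ≠ g j ∧ g i ≠ f j

/-- A non-trivial segment: a maximal 2-node-connected (induced) subgraph with at
least 3 nodes. -/
def IsNontrivialSegment (Γ : SimpleGraph W) (S : Set W) : Prop :=
  3 ≤ S.ncard ∧ TwoVertexConnected (Γ.induce S) ∧
    ∀ S' : Set W, S ⊆ S' → TwoVertexConnected (Γ.induce S') → S' = S

/-- A trivial segment: a node that is not contained in any non-trivial segment. -/
def IsTrivialSegment (Γ : SimpleGraph W) (A : W) : Prop :=
  ∀ S : Set W, IsNontrivialSegment Γ S → A ∉ S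

/-- A pendant node: a node adjacent to exactly one other node. -/
def IsPendantNode (Γ : SimpleGraph W) (A : W) : Prop :=
  (Γ.neighborSet A).ncard = 1

/-- The graph `Γ` is a path from `P` to `Q` (of length at least 1):
there is a path walk from `P` to `Q` visiting every vertex and using every edge. -/
def IsPathGraphWithEnds (Γ : SimpleGraph W) (P Q : W) : Prop :=
  ∃ p : Γ.Walk P Q, p.IsPath ∧ 1 ≤ p.length ∧ (∀ n : W, n ∈ p.support) ∧
    ∀ e ∈ Γ.edgeSet, e ∈ p.edges

end Generic

/-! ### Subgraph notions -/

variable {V : Type*}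

/-- A subgraph is 2-edge-connected: connected and still connected after deleting any
single edge. -/
def SubTwoEC {G : SimpleGraph V} (K : G.Subgraph) : Prop :=
  K.Connected ∧ ∀ e ∈ K.edgeSet, (K.deleteEdges {e}).Connected

/-- A 2-edge-connected spanning subgraph (2-ECSS) of `G`. -/
def IsTwoECSS (G : SimpleGraph V) (H : G.Subgraph) : Prop :=
  H.IsSpanning ∧ SubTwoEC H

/-- The minimum number of edges of a 2-ECSS of `G`. -/
noncomputable def opt (G : SimpleGraph V) : ℕ :=
  sInf {n : ℕ | ∃ H : G.Subgraph, IsTwoECSS G H ∧ H.edgeSet.ncard = n}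

/-- `C` is a (maximal) connected component of `H`. -/
def IsComponent {G : SimpleGraph V} (H C : G.Subgraph) : Prop :=
  C ≤ H ∧ C.Connected ∧ ∀ C' : G.Subgraph, C ≤ C' → C' ≤ H → C'.Connected → C' = C

/-- `B` is a block of `C`: a maximal 2-edge-connected subgraph. -/
def IsBlock {G : SimpleGraph V} (C B : G.Subgraph) : Prop :=
  B ≤ C ∧ SubTwoEC B ∧ ∀ B' : G.Subgraph, B ≤ B' → B' ≤ C → SubTwoEC B' → B' = B

/-- `e` is a bridge of the subgraph `C`: deleting it disconnects its endpoints. -/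
def IsBridgeIn {G : SimpleGraph V} (C : G.Subgraph) (e : Sym2 V) : Prop :=
  e ∈ C.edgeSet ∧
    ∀ a b : V, s(a, b) = e → ¬ (C.deleteEdges {e}).spanningCoe.Reachable a b

/-- The subgraph contains a bridge ("complex" when it is a component). -/
def HasBridge {G : SimpleGraph V} (C : G.Subgraph) : Prop :=
  ∃ e, IsBridgeIn C e

/-- The subgraph has no bridges. -/
def Bridgeless {G : SimpleGraph V} (H : G.Subgraph) : Prop :=
  ∀ e : Sym2 V, ¬ IsBridgeIn H e

/-- The subgraph `C` is a cycle on `i` vertices (connected and 2-regular). -/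
def IsCycleOn {G : SimpleGraph V} (C : G.Subgraph) (i : ℕ) : Prop :=
  C.Connected ∧ C.verts.ncard = i ∧ ∀ v ∈ C.verts, (C.neighborSet v).ncard = 2

/-- A block `B` of a component `C` is pendant if `C` minus the vertices of `B`
is connected. -/
def IsPendant {G : SimpleGraph V} (C B : G.Subgraph) : Prop :=
  (C.deleteVerts B.verts).Connected

/-- A 2-edge cover: a spanning subgraph in which every vertex has degree at least 2. -/
def IsTwoEdgeCover {G : SimpleGraph V} (H : G.Subgraph) : Prop :=
  H.IsSpanning ∧ ∀ v : V, 2 ≤ (H.neighborSet v).ncard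

/-- A 2-edge cover is triangle-free if no component is a triangle. -/
def IsTriangleFree {G : SimpleGraph V} (H : G.Subgraph) : Prop :=
  ∀ C : G.Subgraph, IsComponent H C → ¬ IsCycleOn C 3

/-- A canonical 2-edge cover: every non-complex component is a cycle on `i` vertices
for some `4 ≤ i ≤ 7` or has at least 8 edges, and in every complex component each
pendant block has at least 6 edges and each non-pendant block has at least 4 edges. -/
def IsCanonical {G : SimpleGraph V} (H : G.Subgraph) : Prop :=
  (∀ C : G.Subgraph, IsComponent H C → ¬ HasBridge C →
      (∃ i, 4 ≤ i ∧ i ≤ 7 ∧ IsCycleOn C i) ∨ 8 ≤ C.edgeSet.ncard) ∧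
  (∀ C : G.Subgraph, IsComponent H C → HasBridge C → ∀ B : G.Subgraph, IsBlock C B →
      (IsPendant C B → 6 ≤ B.edgeSet.ncard) ∧ (¬ IsPendant C B → 4 ≤ B.edgeSet.ncard))

/-- Credit of a single component: a complex component gets its component credit 1,
plus 1 for each block, plus 1/4 for each bridge; a 2EC component with at least 8
edges gets 2; a 2EC component that is a cycle `C_i` gets `i/4` (its number of edges
over 4). -/
noncomputable def componentCredit {G : SimpleGraph V} (C : G.Subgraph) : ℚ :=
  if HasBridge C then
    1 + ({B : G.Subgraph | IsBlock C B}.ncard : ℚ)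
      + ({e : Sym2 V | IsBridgeIn C e}.ncard : ℚ) / 4
  else if 8 ≤ C.edgeSet.ncard then 2
  else (C.edgeSet.ncard : ℚ) / 4

/-- Total credit of a 2-edge cover: sum of the credits of its components. -/
noncomputable def credit {G : SimpleGraph V} (H : G.Subgraph) : ℚ :=
  ∑ᶠ C ∈ {C : G.Subgraph | IsComponent H C}, componentCredit C

/-- Cost of a 2-edge cover: number of edges plus total credit. -/
noncomputable def cost {G : SimpleGraph V} (H : G.Subgraph) : ℚ :=
  (H.edgeSet.ncard : ℚ) + credit H

/-- An `α`-contractible subgraph: a 2-edge-connected subgraph `C` (with at least one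
edge) such that every 2-ECSS of `G` contains at least `|E(C)|/α` edges with both
endpoints in `V(C)`. -/
def IsContractible (α : ℚ) (G : SimpleGraph V) (C : G.Subgraph) : Prop :=
  SubTwoEC C ∧ ∀ H : G.Subgraph, IsTwoECSS G H →
    (C.edgeSet.ncard : ℚ) / α ≤ ({e ∈ H.edgeSet | ∀ x ∈ e, x ∈ C.verts}.ncard : ℚ)

/-- An `(α, ε)`-structured graph: simple (automatic), 2-vertex-connected, with at
least `4/ε` vertices, and containing no `α`-contractible subgraph with at most `2/ε`
edges, no irrelevant edge, no non-isolating 2-vertex cut, and no large 3-vertex cut. -/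
def IsStructured (α ε : ℚ) (G : SimpleGraph V) : Prop :=
  TwoVertexConnected G ∧ (4 / ε ≤ (Nat.card V : ℚ)) ∧
  (∀ C : G.Subgraph, C.edgeSet.Nonempty → (C.edgeSet.ncard : ℚ) ≤ 2 / ε →
      ¬ IsContractible α G C) ∧
  (∀ x y : V, ¬ IsIrrelevantEdge G x y) ∧
  (∀ S : Set V, ¬ IsNonIsolating2Cut G S) ∧
  (∀ S : Set V, ¬ IsLarge3Cut G S)

/-! ### The component graph -/

/-- The component graph `Ĝ_H`: nodes are the components of `H`, two nodes being
adjacent if some edge of `G` joins the corresponding components (self-loops are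
discarded). -/
def compGraph {G : SimpleGraph V} (H : G.Subgraph) :
    SimpleGraph {C : G.Subgraph // IsComponent H C} where
  Adj A B := A ≠ B ∧ ∃ a b : V, a ∈ A.1.verts ∧ b ∈ B.1.verts ∧ G.Adj a b
  symm := by
    constructor
    rintro A B ⟨hne, a, b, ha, hb, hab⟩
    exact ⟨hne.symm, b, a, hb, ha, hab.symm⟩
  loopless := by
    constructor
    rintro A ⟨hne, -⟩
    exact hne rfl

/-- A cycle in the component graph `Ĝ_H` (as a multigraph), given by pairwise
distinct components `D i` and pairwise distinct edges of `G`, the `i`-th edge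
joining a vertex `a i` of `D i` to a vertex `b i` of `D (i+1)`. -/
def IsCompCycle {G : SimpleGraph V} (H : G.Subgraph) {m : ℕ}
    (D : Fin (m + 2) → G.Subgraph) (a b : Fin (m + 2) → V) : Prop :=
  Function.Injective D ∧ (∀ i, IsComponent H (D i)) ∧
  (∀ i, a i ∈ (D i).verts ∧ b i ∈ (D (i + 1)).verts ∧ G.Adj (a i) (b i)) ∧
  Function.Injective fun i => s(a i, b i)

/-! ### Contracting the 2-edge-connected components: solution types -/

/-- `x` and `y` lie in the same 2-edge-connected component of `K`: they are
reachable, and remain reachable after the deletion of any single edge. -/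
def SameTwoEC {G : SimpleGraph V} (K : G.Subgraph) (x y : V) : Prop :=
  K.spanningCoe.Reachable x y ∧
    ∀ e ∈ K.edgeSet, (K.deleteEdges {e}).spanningCoe.Reachable x y

/-- The setoid on the vertices of `K` identifying vertices in the same
2-edge-connected component. -/
def twoECSetoid {G : SimpleGraph V} (K : G.Subgraph) : Setoid K.verts where
  r x y := SameTwoEC K x.1 y.1
  iseqv := by
    constructor
    · exact fun x => ⟨Reachable.refl _, fun e _ => Reachable.refl _⟩
    · exact fun h => ⟨h.1.symm, fun e he => (h.2 e he).symm⟩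
    · exact fun h h' => ⟨h.1.trans h'.1, fun e he => (h.2 e he).trans (h'.2 e he)⟩

/-- The super-nodes: 2-edge-connected components of `K`, as a quotient. -/
def SNode {G : SimpleGraph V} (K : G.Subgraph) :=
  Quotient (twoECSetoid K)

/-- The graph obtained from `K` by contracting each 2-edge-connected component into
a single super-node. -/
def contractTwoEC {G : SimpleGraph V} (K : G.Subgraph) : SimpleGraph (SNode K) where
  Adj P Q := P ≠ Q ∧ ∃ x y : K.verts,
    Quotient.mk (twoECSetoid K) x = P ∧ Quotient.mk (twoECSetoid K) y = Q ∧ K.Adj x.1 y.1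
  symm := by
    constructor
    rintro P Q ⟨hne, x, y, hx, hy, hxy⟩
    exact ⟨hne.symm, y, x, hy, hx, hxy.symm⟩
  loopless := by
    constructor
    rintro P ⟨hne, -⟩
    exact hne rfl

/-- The super-node containing a vertex. -/
def cls {G : SimpleGraph V} (K : G.Subgraph) (x : K.verts) : SNode K :=
  Quotient.mk (twoECSetoid K) x

/-- Type A: the contraction is a single super-node. -/
def TypeA {G : SimpleGraph V} (K : G.Subgraph) (u v w : K.verts) : Prop :=
  ∀ n : SNode K, n = cls K u

/-- Type B1: the contraction is a path `C₁ - ⋯ - C_k` of length at least 1 with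
`u, v, w ∈ C₁ ∪ C_k` and at most two of `u, v, w` in each of `C₁` and `C_k`. -/
def TypeB1 {G : SimpleGraph V} (K : G.Subgraph) (u v w : K.verts) : Prop :=
  ∃ P Q : SNode K, IsPathGraphWithEnds (contractTwoEC K) P Q ∧
    (cls K u = P ∨ cls K u = Q) ∧ (cls K v = P ∨ cls K v = Q) ∧
    (cls K w = P ∨ cls K w = Q) ∧
    ¬ (cls K u = P ∧ cls K v = P ∧ cls K w = P) ∧
    ¬ (cls K u = Q ∧ cls K v = Q ∧ cls K w = Q)

/-- Type B2: the contraction consists of two isolated super-nodes, each containing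
at most two of `u, v, w`. -/
def TypeB2 {G : SimpleGraph V} (K : G.Subgraph) (u v w : K.verts) : Prop :=
  ∃ P Q : SNode K, P ≠ Q ∧ (∀ n : SNode K, n = P ∨ n = Q) ∧
    (∀ P' Q' : SNode K, ¬ (contractTwoEC K).Adj P' Q') ∧
    ¬ (cls K u = cls K v ∧ cls K v = cls K w)

/-- Type C1: the contraction is a tree and `u, v, w` lie in three distinct
super-nodes. -/
def TypeC1 {G : SimpleGraph V} (K : G.Subgraph) (u v w : K.verts) : Prop :=
  (contractTwoEC K).IsTree ∧
    cls K u ≠ cls K v ∧ cls K u ≠ cls K w ∧ cls K v ≠ cls K w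

/-- Type C2: the contraction is a path of length at least 1 together with one
isolated super-node, such that each of the two path ends and the isolated super-node
contains exactly one of `u, v, w`. -/
def TypeC2 {G : SimpleGraph V} (K : G.Subgraph) (u v w : K.verts) : Prop :=
  ∃ P Q R : SNode K,
    (∃ p : (contractTwoEC K).Walk P Q, p.IsPath ∧ 1 ≤ p.length ∧ R ∉ p.support ∧
      (∀ n : SNode K, n ∈ p.support ∨ n = R) ∧
      ∀ e ∈ (contractTwoEC K).edgeSet, e ∈ p.edges) ∧
    cls K u ≠ cls K v ∧ cls K u ≠ cls K w ∧ cls K v ≠ cls K w ∧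
    ({cls K u, cls K v, cls K w} : Set (SNode K)) = {P, Q, R}

/-- Type C3: the contraction consists of the three isolated super-nodes of
`u`, `v` and `w`. -/
def TypeC3 {G : SimpleGraph V} (K : G.Subgraph) (u v w : K.verts) : Prop :=
  cls K u ≠ cls K v ∧ cls K u ≠ cls K w ∧ cls K v ≠ cls K w ∧
  (∀ n : SNode K, n = cls K u ∨ n = cls K v ∨ n = cls K w) ∧
  ∀ P Q : SNode K, ¬ (contractTwoEC K).Adj P Q

/-- `K` is of one of the six solution types with respect to `u, v, w`. -/
def OfAnyType {G : SimpleGraph V} (K : G.Subgraph) (u v w : K.verts) : Prop :=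
  TypeA K u v w ∨ TypeB1 K u v w ∨ TypeB2 K u v w ∨
    TypeC1 K u v w ∨ TypeC2 K u v w ∨ TypeC3 K u v w

/-! ### Sides of a 3-vertex cut, contracted sides, and related helpers -/

/-- The induced subgraph `G[V₁ ∪ {u,v,w}]` (as a subgraph of `G`). -/
def sideOne (G : SimpleGraph V) (V1 : Set V) (u v w : V) : G.Subgraph :=
  (⊤ : G.Subgraph).induce (V1 ∪ {u, v, w})

/-- The induced subgraph `G[V₂ ∪ {u,v,w}]` minus the edges `uv`, `vw`, `uw`. -/
def sideTwo (G : SimpleGraph V) (V2 : Set V) (u v w : V) : G.Subgraph :=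
  ((⊤ : G.Subgraph).induce (V2 ∪ {u, v, w})).deleteEdges {s(u, v), s(v, w), s(u, w)}

/-- The connected component of the subgraph `K` containing the vertex `z`. -/
def compOf {G : SimpleGraph V} (K : G.Subgraph) (z : V) : G.Subgraph where
  verts := {y | y ∈ K.verts ∧ K.spanningCoe.Reachable z y}
  Adj x y := K.Adj x y ∧ K.spanningCoe.Reachable z x
  adj_sub := fun h => K.adj_sub h.1
  edge_vert := fun h => ⟨K.edge_vert h.1, h.2⟩
  symm := by
    constructor
    rintro x y ⟨hxy, hzx⟩
    exact ⟨hxy.symm, hzx.trans (SimpleGraph.Adj.reachable (by exact hxy))⟩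

/-- There is an edge of `Gi` that is not an edge of `Hi` between `A` and `B`. -/
def CrossEdge {G : SimpleGraph V} (Gi Hi : G.Subgraph) (A B : Set V) : Prop :=
  ∃ a b : V, a ∈ A ∧ b ∈ B ∧ Gi.Adj a b ∧ ¬ Hi.Adj a b

/-- Claim (1) of the spanning-tree lemma for 3-vertex cuts. -/
def ClaimOne {G : SimpleGraph V} (Gi Hi : G.Subgraph) (x : V) : Prop :=
  compOf Hi x ≠ Hi →
    ∃ a b : V, a ∈ (compOf Hi x).verts ∧ b ∈ Hi.verts ∧ b ∉ (compOf Hi x).verts ∧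
      Gi.Adj a b ∧ ¬ Hi.Adj a b

/-- Claim (2) of the spanning-tree lemma for 3-vertex cuts. -/
def ClaimTwo {G : SimpleGraph V} (Gi Hi : G.Subgraph) (u v w : V) : Prop :=
  (Disjoint (compOf Hi u).verts (compOf Hi v).verts ∧
      Disjoint (compOf Hi v).verts (compOf Hi w).verts ∧
      Disjoint (compOf Hi u).verts (compOf Hi w).verts) →
    (CrossEdge Gi Hi (compOf Hi u).verts (compOf Hi v).verts ∧
        CrossEdge Gi Hi (compOf Hi v).verts (compOf Hi w).verts) ∨
      (CrossEdge Gi Hi (compOf Hi v).verts (compOf Hi w).verts ∧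
        CrossEdge Gi Hi (compOf Hi u).verts (compOf Hi w).verts) ∨
      (CrossEdge Gi Hi (compOf Hi u).verts (compOf Hi v).verts ∧
        CrossEdge Gi Hi (compOf Hi u).verts (compOf Hi w).verts)

/-- The condition of the gluing lemma: every edge of `Hi` is in a 2-edge-connected
component of `Hi`, or lies on an `x`-`y` path in `Hi` for distinct
`x, y ∈ {u, v, w}` such that `x` and `y` are also connected in `Hj`. -/
def EdgeCond {G : SimpleGraph V} (Hi Hj : G.Subgraph) (u v w : V) : Prop :=
  ∀ a b : V, Hi.Adj a b →
    SameTwoEC Hi a b ∨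
      ∃ x ∈ ({u, v, w} : Set V), ∃ y ∈ ({u, v, w} : Set V), x ≠ y ∧
        (∃ p : Hi.spanningCoe.Walk x y, p.IsPath ∧ s(a, b) ∈ p.edges) ∧
        Hj.spanningCoe.Reachable x y

/-- The set of all potential edges among a vertex set `S` (used to model the
contraction of `S` into a single vertex). -/
def cliqueOn (S : Set V) : Set (Sym2 V) :=
  {e | ∃ a ∈ S, ∃ b ∈ S, a ≠ b ∧ e = s(a, b)}

/-- The edge set `K` forms a 2-edge-connected spanning subgraph of the graph on `Wt`
with the set `S ⊆ Wt` contracted into a single vertex: modelled by making `S` into a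
blob using `cliqueOn S` (whose edges are never deleted). -/
def ContractedTwoECSS (Wt S : Set V) (K : Set (Sym2 V)) : Prop :=
  ((SimpleGraph.fromEdgeSet (K ∪ cliqueOn S)).induce Wt).Connected ∧
  ∀ e ∈ K, ((SimpleGraph.fromEdgeSet ((K \ {e}) ∪ cliqueOn S)).induce Wt).Connected

end ECSS

/-! If there is no matching of size 3 between `V1` and `V2`, König's theorem gives two vertices
`s, t` meeting every `V1`–`V2` edge. As both sides have at least three vertices, `{s, t}`
separates `V1 \ {s, t}` from `V2 \ {s, t}`; since `G` has no cut vertex, `{s, t}` is a 2-vertex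
cut, hence an isolating one. The isolated vertex `z` then exhausts one side, say `V1 = {s, t, z}`,
so `G[V1]` is a triangle and `st` is an irrelevant edge. -/

namespace SimpleGraph

variable {W : Type*} {Γ : SimpleGraph W}

theorem not_reachable_of_forall_not_adj {A : Set W} (hA : ∀ x ∈ A, ∀ y ∉ A, ¬ Γ.Adj x y)
    {u v : W} (hu : u ∈ A) (hv : v ∉ A) : ¬ Γ.Reachable u v := by
  rintro ⟨p⟩
  obtain ⟨d, -, hd, hd'⟩ := p.exists_boundary_dart A hu hv
  exact hA _ hd _ hd' d.adj

theorem subsingleton_or_subsingleton_of_not_reachable [Finite W]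
    (hcard : Nat.card Γ.ConnectedComponent = 2) {c : Γ.ConnectedComponent}
    (hc : c.supp.ncard = 1) {A B : Set W} (hA : A.Nonempty) (hB : B.Nonempty)
    (hAB : ∀ a ∈ A, ∀ b ∈ B, ¬ Γ.Reachable a b) : A.Subsingleton ∨ B.Subsingleton := by
  obtain ⟨a, ha⟩ := hA
  obtain ⟨b, hb⟩ := hB
  have hother : ∀ d : Γ.ConnectedComponent, ∀ x y, x ≠ d → y ≠ d → x = y :=
    fun d x y hx hy => ((Nat.card_eq_two_iff' d).mp hcard).unique hx hy
  have hne : Γ.connectedComponentMk a ≠ Γ.connectedComponentMk b :=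
    fun h => hAB a ha b hb (ConnectedComponent.exact h)
  have hAa : A ⊆ (Γ.connectedComponentMk a).supp := fun a' ha' =>
    hother _ _ _ (fun h => hAB a' ha' b hb (ConnectedComponent.exact h)) hne
  have hBb : B ⊆ (Γ.connectedComponentMk b).supp := fun b' hb' =>
    hother _ _ _ (fun h => hAB a ha b' hb' (ConnectedComponent.exact h.symm)) hne.symm
  have hsupp : c.supp.Subsingleton := by
    obtain ⟨z, hz⟩ := Set.ncard_eq_one.mp hc
    exact hz ▸ Set.subsingleton_singleton
  by_cases hca : c = Γ.connectedComponentMk a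
  · exact .inl (hsupp.anti (hca ▸ hAa))
  · exact .inr (hsupp.anti (hother _ _ _ hca hne.symm ▸ hBb))

end SimpleGraph

namespace ECSS

variable {W : Type*} {Γ : SimpleGraph W} {V1 V2 : Set W}

def IsCrossEdge (Γ : SimpleGraph W) (V1 V2 : Set W) (a b : W) : Prop :=
  a ∈ V1 ∧ b ∈ V2 ∧ Γ.Adj a b

def IsCrossingCover (Γ : SimpleGraph W) (V1 V2 S : Set W) : Prop :=
  ∀ a b, IsCrossEdge Γ V1 V2 a b → a ∈ S ∨ b ∈ S

theorem exists_isCrossEdge_of_not_isCrossingCover {s t : W}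
    (h : ¬ IsCrossingCover Γ V1 V2 {s, t}) :
    ∃ a b, IsCrossEdge Γ V1 V2 a b ∧ a ≠ s ∧ a ≠ t ∧ b ≠ s ∧ b ≠ t := by
  simpa [IsCrossingCover, not_or, and_assoc] using h

theorem hasMatchingBetween_of_injective {k : ℕ} (hdisj : Disjoint V1 V2) {f g : Fin k → W}
    (hf : f.Injective) (hg : g.Injective) (hfg : ∀ i, IsCrossEdge Γ V1 V2 (f i) (g i)) :
    HasMatchingBetween Γ V1 V2 k := by
  have hne : ∀ i j, f i ≠ g j := fun i j h =>
    Set.disjoint_left.mp hdisj (hfg i).1 (h ▸ (hfg j).2.1)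
  exact ⟨f, g, hfg, fun i j hij => ⟨hf.ne hij, hg.ne hij, hne i j, (hne j i).symm⟩⟩

theorem hasMatchingBetween_three (hdisj : Disjoint V1 V2) {a₁ a₂ a₃ b₁ b₂ b₃ : W}
    (h₁ : IsCrossEdge Γ V1 V2 a₁ b₁) (h₂ : IsCrossEdge Γ V1 V2 a₂ b₂)
    (h₃ : IsCrossEdge Γ V1 V2 a₃ b₃) (ha : [a₁, a₂, a₃].Nodup) (hb : [b₁, b₂, b₃].Nodup) :
    HasMatchingBetween Γ V1 V2 3 := by
  refine hasMatchingBetween_of_injective (f := ![a₁, a₂, a₃]) (g := ![b₁, b₂, b₃]) hdisj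
    ?_ ?_ (Fin.forall_fin_succ.mpr ⟨h₁, Fin.forall_fin_two.mpr ⟨h₂, h₃⟩⟩)
  · rw [← List.nodup_ofFn]; simpa using ha
  · rw [← List.nodup_ofFn]; simpa using hb

theorem hasMatchingBetween_three_of_shared_endpoint (hdisj : Disjoint V1 V2)
    (H : ∀ s t, ¬ IsCrossingCover Γ V1 V2 {s, t}) {a₁ a₂ b₁ b₂ x : W}
    (e₁ : IsCrossEdge Γ V1 V2 a₁ b₁) (e₂ : IsCrossEdge Γ V1 V2 a₂ b₂)
    (e : IsCrossEdge Γ V1 V2 x b₁) (ha : a₁ ≠ a₂) (hb : b₁ ≠ b₂) (hx₁ : x ≠ a₁) (hx₂ : x ≠ a₂) :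
    HasMatchingBetween Γ V1 V2 3 := by
  obtain ⟨p, q, e₃, -, -, hq₁, hq₂⟩ := exists_isCrossEdge_of_not_isCrossingCover (H b₁ b₂)
  by_cases hp₁ : p = a₁
  · subst hp₁
    exact hasMatchingBetween_three hdisj e e₃ e₂ (by grind) (by grind)
  by_cases hp₂ : p = a₂
  · subst hp₂
    obtain ⟨p', q', e₄, hp', -, -, hq'⟩ := exists_isCrossEdge_of_not_isCrossingCover (H p b₁)
    by_cases hp'₁ : p' = a₁ <;> by_cases hq'₂ : q' = b₂ <;> subst_vars
    · exact hasMatchingBetween_three hdisj e e₄ e₃ (by grind) (by grind)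
    · exact hasMatchingBetween_three hdisj e e₄ e₂ (by grind) (by grind)
    · exact hasMatchingBetween_three hdisj e₄ e₁ e₃ (by grind) (by grind)
    · exact hasMatchingBetween_three hdisj e₁ e₂ e₄ (by grind) (by grind)
  exact hasMatchingBetween_three hdisj e₁ e₂ e₃ (by grind) (by grind)

/-- The case `k = 3` of König's theorem for the bipartite graph of crossing edges. -/
theorem exists_isCrossingCover_pair_of_not_hasMatchingBetween_three [Nonempty W]
    (hdisj : Disjoint V1 V2) (h : ¬ HasMatchingBetween Γ V1 V2 3) :
    ∃ s t, IsCrossingCover Γ V1 V2 {s, t} := by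
  by_contra! H
  apply h
  obtain ⟨a₁, b₁, e₁, -⟩ := exists_isCrossEdge_of_not_isCrossingCover
    (H (Classical.arbitrary W) (Classical.arbitrary W))
  obtain ⟨a₂, b₂, e₂, ha, -, -, hb⟩ := exists_isCrossEdge_of_not_isCrossingCover (H a₁ b₁)
  obtain ⟨x, y, e, hx₁, hx₂, -⟩ := exists_isCrossEdge_of_not_isCrossingCover (H a₁ a₂)
  by_cases hy₁ : y = b₁
  · subst hy₁
    exact hasMatchingBetween_three_of_shared_endpoint hdisj H e₁ e₂ e ha.symm hb.symm hx₁ hx₂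
  by_cases hy₂ : y = b₂
  · subst hy₂
    exact hasMatchingBetween_three_of_shared_endpoint hdisj H e₂ e₁ e ha hb hx₂ hx₁
  exact hasMatchingBetween_three hdisj e₁ e₂ e (by grind) (by grind)

theorem isCutSet_of_not_reachable [Finite W] (hconn : Γ.Connected) {S : Set W} {u v : ↥Sᶜ}
    (huv : ¬ (Γ.induce Sᶜ).Reachable u v) : IsCutSet Γ S := by
  have : Nontrivial (Γ.induce Sᶜ).ConnectedComponent :=
    ⟨_, _, fun h => huv (ConnectedComponent.exact h)⟩
  exact (Finite.card_le_one_iff_subsingleton.mpr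
    hconn.preconnected.subsingleton_connectedComponent).trans_lt Finite.one_lt_card

theorem not_reachable_induce_of_isCrossingCover (hunion : V1 ∪ V2 = Set.univ)
    (hdisj : Disjoint V1 V2) {S : Set W} (hS : IsCrossingCover Γ V1 V2 S) :
    ∀ a ∈ (Subtype.val ⁻¹' V1 : Set ↥Sᶜ), ∀ b ∈ (Subtype.val ⁻¹' V2 : Set ↥Sᶜ),
      ¬ (Γ.induce Sᶜ).Reachable a b := by
  refine fun a ha b hb => not_reachable_of_forall_not_adj (fun x hx y hy hxy => ?_) ha
    (Set.disjoint_right.mp hdisj hb)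
  have hy₂ : (y : W) ∈ V2 := (hunion ▸ Set.mem_univ (y : W)).resolve_left hy
  exact (hS x y ⟨hx, hy₂, hxy⟩).elim x.2 y.2

theorem adj_of_subsingleton_sdiff [Finite W] {s t : W} (hst : s ≠ t) (h3 : 3 ≤ V1.ncard)
    (htri : V1.ncard = 3 → ∀ x ∈ V1, ∀ y ∈ V1, x ≠ y → Γ.Adj x y)
    (hsub : (V1 \ {s, t}).Subsingleton) : Γ.Adj s t := by
  have hsplit := Set.ncard_inter_add_ncard_sdiff_eq_ncard V1 {s, t}
  have hrest : (V1 \ {s, t}).ncard ≤ 1 := Set.ncard_le_one_iff_subsingleton.mpr hsub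
  have hpair : (V1 ∩ {s, t}).ncard ≤ 2 :=
    (Set.ncard_inter_le_ncard_right _ _).trans (Set.ncard_pair hst).le
  have hst_sub : {s, t} ⊆ V1 := Set.inter_eq_right.mp <|
    Set.eq_of_subset_of_ncard_le Set.inter_subset_right (by rw [Set.ncard_pair hst]; omega)
  exact htri (by omega) s (hst_sub (by simp)) t (hst_sub (by simp)) hst

end ECSS

theorem statement_2_general {V : Type*} [Fintype V] (G : SimpleGraph V)
    (h2vc : ECSS.TwoVertexConnected G)
    (hirr : ∀ x y : V, ¬ ECSS.IsIrrelevantEdge G x y)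
    (hni : ∀ S : Set V, ¬ ECSS.IsNonIsolating2Cut G S)
    (V1 V2 : Set V) (hunion : V1 ∪ V2 = Set.univ) (hdisj : Disjoint V1 V2)
    (h1 : 3 ≤ V1.ncard) (h2 : 3 ≤ V2.ncard)
    (ht1 : V1.ncard = 3 → ∀ x ∈ V1, ∀ y ∈ V1, x ≠ y → G.Adj x y)
    (ht2 : V2.ncard = 3 → ∀ x ∈ V2, ∀ y ∈ V2, x ≠ y → G.Adj x y) :
    ECSS.HasMatchingBetween G V1 V2 3 := by
  by_contra hno
  have : Nonempty V := (Set.nonempty_of_ncard_ne_zero (by omega : V1.ncard ≠ 0)).to_subtype.map (↑)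
  obtain ⟨s, t, hcover⟩ :=
    ECSS.exists_isCrossingCover_pair_of_not_hasMatchingBetween_three hdisj hno
  set S : Set V := {s, t}
  have hsep := ECSS.not_reachable_induce_of_isCrossingCover hunion hdisj hcover
  have hS : S.ncard ≤ 2 := (Set.ncard_insert_le s {t}).trans (by simp)
  obtain ⟨a, ha, haS⟩ := Set.sdiff_nonempty_of_ncard_lt_ncard (s := S) (t := V1) (by omega)
  obtain ⟨b, hb, hbS⟩ := Set.sdiff_nonempty_of_ncard_lt_ncard (s := S) (t := V2) (by omega)
  have hcut : ECSS.IsCutSet G S :=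
    ECSS.isCutSet_of_not_reachable h2vc.1 (hsep ⟨a, haS⟩ ha ⟨b, hbS⟩ hb)
  have hst : s ≠ t := by
    rintro rfl
    exact h2vc.2 s (by simpa [S] using hcut)
  have hcut2 : ECSS.IsVertexCut G S 2 := ⟨Set.ncard_pair hst, hcut⟩
  obtain ⟨-, hcomp, c, hc⟩ : ECSS.IsIsolating2Cut G S := not_not.mp fun h => hni S ⟨hcut2, h⟩
  have hside : ∀ Vi : Set V, (Subtype.val ⁻¹' Vi : Set ↥Sᶜ).Subsingleton → (Vi \ S).Subsingleton :=
    fun Vi h => by simpa [Set.sdiff_eq, Set.inter_comm] using h.image Subtype.val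
  have hadj : G.Adj s t := by
    rcases subsingleton_or_subsingleton_of_not_reachable hcomp hc
      ⟨⟨a, haS⟩, ha⟩ ⟨⟨b, hbS⟩, hb⟩ hsep with h | h
    · exact ECSS.adj_of_subsingleton_sdiff hst h1 ht1 (hside V1 h)
    · exact ECSS.adj_of_subsingleton_sdiff hst h2 ht2 (hside V2 h)
  exact hirr s t ⟨hadj, hcut2⟩

/-- 3-Matching Lemma: Let `G` be a 2-vertex-connected simple graph
without irrelevant edges and without non-isolating 2-vertex cuts. Let `(V1, V2)` be
a partition of `V(G)` with `|Vi| ≥ 3`, such that if `|Vi| = 3` then `G[Vi]` is a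
triangle. Then there exists a matching of size 3 between `V1` and `V2` in `G`. -/
theorem statement_2 {V : Type*} [Fintype V] [DecidableEq V] (G : SimpleGraph V)
    (h2vc : ECSS.TwoVertexConnected G)
    (hirr : ∀ x y : V, ¬ ECSS.IsIrrelevantEdge G x y)
    (hni : ∀ S : Set V, ¬ ECSS.IsNonIsolating2Cut G S)
    (V1 V2 : Set V) (hunion : V1 ∪ V2 = Set.univ) (hdisj : Disjoint V1 V2)
    (h1 : 3 ≤ V1.ncard) (h2 : 3 ≤ V2.ncard)
    (ht1 : V1.ncard = 3 → ∀ x ∈ V1, ∀ y ∈ V1, x ≠ y → G.Adj x y)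
    (ht2 : V2.ncard = 3 → ∀ x ∈ V2, ∀ y ∈ V2, x ≠ y → G.Adj x y) :
    ECSS.HasMatchingBetween G V1 V2 3 :=
  statement_2_general G h2vc hirr hni V1 V2 hunion hdisj h1 h2 ht1 ht2
end

section
/- Let G be a 2-vertex-connected simple graph without irrelevant edges and without non-isolating 2-vertex cuts, and let H be a bridgeless canonical 2-edge cover of G. Let A and B be adjacent nodes in the component graph Ĝ_H such that A is a trivial segment. Then there exists a matching of size 3 between V(C_A) and V(C_B) in G. -/
open SimpleGraph

open scoped Classical

/-!
If there is no matching of size 3 between `V(C_A)` and `V(C_B)`, König's theorem yields two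
vertices `T` covering every edge of `G` between them. As `A` lies on no cycle of `Ĝ_H`, the
edge `AB` is a bridge of `Ĝ_H`, so no path of `G - T` joins `C_A` to `C_B`. Every component of
a canonical 2-edge cover has at least four vertices, so both `C_A - T` and `C_B - T` keep two
vertices, and `T` is a non-isolating 2-vertex cut.
-/

open Finset in
-- König's theorem: `↑sᶜ ∪ ↑(s.biUnion t)` is a vertex cover of size less than `k`.
theorem Finset.exists_card_compl_add_card_biUnion_lt {ι α : Type*} [Fintype ι] [DecidableEq ι]
    [DecidableEq α] (t : ι → Finset α) {k : ℕ}
    (h : ∀ (s : Finset ι) (f : s → α), Function.Injective f → (∀ i, f i ∈ t i.1) → #s < k) :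
    ∃ s : Finset ι, #sᶜ + #(s.biUnion t) < k := by
  by_contra! hcover
  have hk : k ≤ Fintype.card ι := by simpa using hcover ∅
  set d := Fintype.card ι - k
  -- With `d` dummy vertices adjacent to everything, Hall's condition holds.
  let t' : ι → Finset (α ⊕ Fin d) := fun i => (t i).disjSum univ
  have hall : ∀ s : Finset ι, #s ≤ #(s.biUnion t') := by
    intro s
    rcases s.eq_empty_or_nonempty with rfl | ⟨i₀, hi₀⟩
    · simp
    have hsub : (s.biUnion t).disjSum univ ⊆ s.biUnion t' := by
      rintro (a | j) h
      · obtain ⟨i, hi, ha⟩ := mem_biUnion.1 (inl_mem_disjSum.1 h)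
        exact mem_biUnion.2 ⟨i, hi, inl_mem_disjSum.2 ha⟩
      · exact mem_biUnion.2 ⟨i₀, hi₀, inr_mem_disjSum.2 (mem_univ j)⟩
    have hle := card_le_card hsub
    have hs := hcover s
    rw [card_disjSum, card_univ, Fintype.card_fin] at hle
    rw [card_compl] at hs
    have := s.card_le_univ
    omega
  obtain ⟨f, hf, hft⟩ := (all_card_le_biUnion_card_iff_exists_injective t').1 hall
  set s := univ.filter fun i => (f i).isLeft
  have hsc : #sᶜ ≤ d := by
    refine (card_le_card_of_injOn f (t := univ.map .inr) (fun i hi => ?_) hf.injOn).trans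
      (by simp)
    obtain ⟨j, hj⟩ := Sum.isRight_iff.1 (by simpa [s] using hi)
    simp [hj]
  have hleft : ∀ i : s, (f i).isLeft := fun i => (mem_filter.1 i.2).2
  refine (h s (fun i => (f i).getLeft (hleft i)) (fun i j hij => ?_) (fun i => ?_)).not_ge ?_
  · exact Subtype.ext (hf (by simpa [Sum.getLeft_eq_iff] using hij))
  · obtain ⟨a, ha⟩ := Sum.isLeft_iff.1 (hleft i)
    simpa [ha, t'] using hft i
  · rw [card_compl] at hsc
    omega

namespace SimpleGraph

variable {N N' : Type*} {Γ : SimpleGraph N} {Γ' : SimpleGraph N'}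

lemma Reachable.map_of_adj_reachable {f : N → N'}
    (hf : ∀ x y, Γ.Adj x y → Γ'.Reachable (f x) (f y)) {x y : N} (h : Γ.Reachable x y) :
    Γ'.Reachable (f x) (f y) := by
  rw [reachable_iff_reflTransGen] at h ⊢
  exact h.lift' f fun a b hab => (reachable_iff_reflTransGen _ _).1 (hf a b hab)

lemma Walk.IsCycle.connected_induce_support_sdiff {v : N} {c : Γ.Walk v v} (hc : c.IsCycle) :
    (Γ.induce ({x | x ∈ c.support} \ {v})).Connected := by
  cases c with
  | nil => exact absurd hc Walk.not_isCycle_nil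
  | cons hadj q =>
    -- Removing `v` from the cycle leaves the path `q.dropLast`.
    have hq : ¬ q.Nil := fun hnil => hadj.ne (Walk.Nil.eq hnil).symm
    have hsupp := Walk.support_dropLast_concat hq
    have hnodup := ((Walk.cons_isCycle_iff q hadj).1 hc).1.support_nodup
    rw [← hsupp, List.nodup_append] at hnodup
    have hverts : {x | x ∈ (Walk.cons hadj q).support} \ {v} = {x | x ∈ q.dropLast.support} := by
      ext x
      simp only [Walk.support_cons, List.mem_cons, Set.mem_sdiff, Set.mem_ofPred_eq,
        Set.mem_singleton_iff]
      rw [← hsupp, List.mem_append, List.mem_singleton]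
      constructor
      · rintro ⟨h | h | h, hx⟩ <;> first | exact absurd h hx | exact h
      · exact fun h => ⟨Or.inr (Or.inl h), hnodup.2.2 x h v (List.mem_singleton_self v)⟩
    rw [hverts]
    exact q.dropLast.connected_induce_support

lemma connected_induce_compl_singleton {S : Set N} {v : S}
    (h : (Γ.induce (S \ {v.1})).Connected) : ((Γ.induce S).induce {v}ᶜ).Connected :=
  h.map ⟨fun x => ⟨⟨x.1, x.2.1⟩, fun hx => x.2.2 (congrArg Subtype.val hx)⟩, id⟩
    fun x => ⟨⟨x.1.1, x.1.2, fun hx => x.2 (Subtype.ext hx)⟩, rfl⟩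

lemma Walk.IsCycle.three_le_ncard_support {u : N} {c : Γ.Walk u u} (hc : c.IsCycle) :
    3 ≤ {x | x ∈ c.support}.ncard := by
  have hsupp : {x | x ∈ c.support} = ↑c.support.tail.toFinset := by
    ext x
    simp only [Set.mem_ofPred_eq, List.coe_toFinset]
    refine ⟨fun h => ?_, List.mem_of_mem_tail⟩
    rcases (Walk.mem_support_iff c).1 h with rfl | h
    exacts [Walk.end_mem_tail_support hc.not_nil, h]
  rw [hsupp, Set.ncard_coe_finset, List.toFinset_card_of_nodup hc.support_nodup,
    List.length_tail, Walk.length_support]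
  have := hc.three_le_length
  omega

lemma Subgraph.ncard_edgeSet_le_choose_two [Finite N] (C : Γ.Subgraph) :
    C.edgeSet.ncard ≤ C.verts.ncard.choose 2 := by
  have := Fintype.ofFinite N
  calc C.edgeSet.ncard
      ≤ (↑(C.verts.toFinset.offDiag.image Sym2.mk.uncurry) : Set (Sym2 N)).ncard := by
        refine Set.ncard_le_ncard (fun e he => ?_)
        induction e using Sym2.ind with
        | _ a b =>
          have hab : C.Adj a b := he
          simpa using ⟨a, b, ⟨C.edge_vert hab, C.edge_vert hab.symm, hab.ne⟩, Or.inl ⟨rfl, rfl⟩⟩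
    _ = C.verts.ncard.choose 2 := by
        rw [Set.ncard_coe_finset, Sym2.card_image_offDiag, Set.ncard_eq_toFinset_card']

end SimpleGraph

namespace ECSS

section Graph

variable {N : Type*} {Γ : SimpleGraph N}

lemma numComponents_eq_one (h : Γ.Connected) : numComponents Γ = 1 :=
  have := h.preconnected.subsingleton_connectedComponent
  have := h.nonempty
  Nat.card_unique

lemma hasMatchingBetween_of_injective_s9 [Fintype N] {V₁ V₂ : Set N} (hdisj : Disjoint V₁ V₂)
    {k : ℕ} {s : Finset N} (hs : k ≤ s.card) {g : s → N} (hg : Function.Injective g)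
    (hadj : ∀ i : s, i.1 ∈ V₁ ∧ g i ∈ V₂ ∧ Γ.Adj i (g i)) :
    HasMatchingBetween Γ V₁ V₂ k := by
  let e : Fin k ↪ s := (Fin.castLEEmb hs).trans s.equivFin.symm.toEmbedding
  have hne : ∀ i j, (e i).1 ≠ g (e j) := fun i j h =>
    Set.disjoint_left.1 hdisj (hadj (e i)).1 (h ▸ (hadj (e j)).2.1)
  refine ⟨fun i => e i, fun i => g (e i), fun i => hadj (e i), fun i j hij => ?_⟩
  exact ⟨fun h => hij (e.injective (Subtype.ext h)), fun h => hij (e.injective (hg h)),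
    hne i j, (hne j i).symm⟩

lemma exists_cover_of_not_hasMatchingBetween [Fintype N] {V₁ V₂ : Set N}
    (hdisj : Disjoint V₁ V₂) {k : ℕ} (h : ¬ HasMatchingBetween Γ V₁ V₂ k) :
    ∃ S : Set N, S.ncard < k ∧ ∀ a ∈ V₁, ∀ b ∈ V₂, Γ.Adj a b → a ∈ S ∨ b ∈ S := by
  let t : N → Finset N := fun a => {b | a ∈ V₁ ∧ b ∈ V₂ ∧ Γ.Adj a b}
  obtain ⟨s, hs⟩ := Finset.exists_card_compl_add_card_biUnion_lt t (k := k)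
    fun s g hg hgt => lt_of_not_ge fun hks =>
      h (hasMatchingBetween_of_injective_s9 hdisj hks hg fun i => by simpa [t] using hgt i)
  refine ⟨↑sᶜ ∪ ↑(s.biUnion t), (Set.ncard_union_le _ _).trans_lt ?_, ?_⟩
  · rwa [Set.ncard_coe_finset, Set.ncard_coe_finset]
  intro a ha b hb hab
  by_cases has : a ∈ s
  · exact Or.inr (Or.inr (by simpa [t, hb] using ⟨a, ha, has, hab⟩))
  · exact Or.inl (Or.inl (by simpa using has))

lemma twoVertexConnected_induce_support_of_isCycle {u : N} {c : Γ.Walk u u}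
    (hc : c.IsCycle) : TwoVertexConnected (Γ.induce {x | x ∈ c.support}) := by
  refine ⟨c.connected_induce_support, fun v => ?_⟩
  have hrot : {x | x ∈ (c.rotate v.1 v.2).support} = {x | x ∈ c.support} := by
    ext; simp
  have hconn := (hc.rotate v.2).connected_induce_support_sdiff
  rw [hrot] at hconn
  rw [IsCutSet, numComponents_eq_one c.connected_induce_support,
    numComponents_eq_one (connected_induce_compl_singleton hconn)]
  exact lt_irrefl 1

lemma exists_isNontrivialSegment_of_isCycle [Finite N] {u : N} {c : Γ.Walk u u}
    (hc : c.IsCycle) : ∃ S, IsNontrivialSegment Γ S ∧ {x | x ∈ c.support} ⊆ S := by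
  obtain ⟨S, hcS, hS, hmax⟩ := Finite.exists_le_maximal
    (p := fun S => TwoVertexConnected (Γ.induce S)) (twoVertexConnected_induce_support_of_isCycle hc)
  refine ⟨S, ⟨hc.three_le_ncard_support.trans (Set.ncard_le_ncard hcS), hS,
    fun S' hSS' hS' => (hmax hS' hSS').antisymm hSS'⟩, hcS⟩

lemma IsTrivialSegment.not_reachable_deleteEdges [Finite N] {A B : N}
    (hA : IsTrivialSegment Γ A) (hAB : Γ.Adj A B) :
    ¬ (Γ.deleteEdges {s(A, B)}).Reachable A B := by
  intro h
  obtain ⟨u, c, hc, he⟩ := adj_and_reachable_delete_edges_iff_exists_cycle.1 ⟨hAB, h⟩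
  obtain ⟨S, hS, hcS⟩ := exists_isNontrivialSegment_of_isCycle hc
  exact hA S hS (hcS (c.fst_mem_support_of_mem_edges he))

lemma isNonIsolating2Cut_of_not_reachable [Finite N] (hconn : Γ.Connected) {T X Y : Set N}
    (hT : T.ncard = 2) (hX : 1 < (X \ T).ncard) (hY : 1 < (Y \ T).ncard)
    (hsep : ∀ x y : ↥Tᶜ, x.1 ∈ X → y.1 ∈ Y → ¬ (Γ.induce Tᶜ).Reachable x y) :
    IsNonIsolating2Cut Γ T := by
  obtain ⟨x₀, x₁, ⟨hx₀, hx₀T⟩, ⟨hx₁, hx₁T⟩, hx⟩ := (Set.one_lt_ncard_iff).1 hX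
  obtain ⟨y₀, y₁, ⟨hy₀, hy₀T⟩, ⟨hy₁, hy₁T⟩, hy⟩ := (Set.one_lt_ncard_iff).1 hY
  let c := (Γ.induce Tᶜ).connectedComponentMk
  have hc : ∀ x y : ↥Tᶜ, x.1 ∈ X → y.1 ∈ Y → c x ≠ c y := fun x y hx hy h =>
    hsep x y hx hy (ConnectedComponent.exact h)
  have hc₀ := hc ⟨x₀, hx₀T⟩ ⟨y₀, hy₀T⟩ hx₀ hy₀
  refine ⟨⟨hT, ?_⟩, ?_⟩
  · rw [IsCutSet, numComponents_eq_one hconn]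
    exact Finite.one_lt_card_iff_nontrivial.2 ⟨_, _, hc₀⟩
  rintro ⟨-, htwo, d, hd⟩
  -- With only two components, `c x₀` and `c y₀` are all of them, and each has two vertices.
  have hall : ∀ e, e = c ⟨x₀, hx₀T⟩ ∨ e = c ⟨y₀, hy₀T⟩ := by
    obtain ⟨e₁, he₁, he₁'⟩ := (Nat.card_eq_two_iff' (c ⟨x₀, hx₀T⟩)).1 htwo
    intro e
    by_contra! he
    exact he.2 ((he₁' _ he.1).trans (he₁' _ hc₀.symm).symm)
  have htwo_supp : ∀ {a b : ↥Tᶜ}, a ≠ b → c a = c b → 2 ≤ (c a).supp.ncard := fun hab h =>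
    (Set.ncard_pair hab).symm.le.trans (Set.ncard_le_ncard (by
      rintro z (rfl | rfl)
      exacts [rfl, h.symm]))
  have hx' : c ⟨x₁, hx₁T⟩ = c ⟨x₀, hx₀T⟩ :=
    (hall _).resolve_right (hc ⟨x₁, hx₁T⟩ ⟨y₀, hy₀T⟩ hx₁ hy₀)
  have hy' : c ⟨y₁, hy₁T⟩ = c ⟨y₀, hy₀T⟩ :=
    ((hall _).resolve_left fun h => hc ⟨x₀, hx₀T⟩ ⟨y₁, hy₁T⟩ hx₀ hy₁ h.symm)
  rcases hall d with rfl | rfl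
  · have := htwo_supp (a := ⟨x₀, hx₀T⟩) (b := ⟨x₁, hx₁T⟩) (by simpa using hx) hx'.symm
    omega
  · have := htwo_supp (a := ⟨y₀, hy₀T⟩) (b := ⟨y₁, hy₁T⟩) (by simpa using hy) hy'.symm
    omega

end Graph

section Subgraph

variable {V : Type*} {G : SimpleGraph V} {H C D : G.Subgraph}

lemma exists_isComponent_mem [Finite V] {x : V} (hx : x ∈ H.verts) :
    ∃ C, IsComponent H C ∧ x ∈ C.verts := by
  obtain ⟨C, hxC, ⟨hCH, hC⟩, hmax⟩ := Finite.exists_le_maximal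
    (p := fun C : G.Subgraph => C ≤ H ∧ C.Connected)
    ⟨(SimpleGraph.singletonSubgraph_le_iff x H).2 hx, Subgraph.singletonSubgraph_connected⟩
  exact ⟨C, ⟨hCH, hC, fun C' hCC' hC'H hC' => (hmax ⟨hC'H, hC'⟩ hCC').antisymm hCC'⟩, hxC.1 rfl⟩

lemma exists_isBlock [Finite V] {x : V} (hx : x ∈ C.verts) : ∃ B, IsBlock C B := by
  have hx' : SubTwoEC (G.singletonSubgraph x) :=
    ⟨Subgraph.singletonSubgraph_connected, by simp [SimpleGraph.edgeSet_singletonSubgraph]⟩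
  obtain ⟨B, -, ⟨hBC, hB⟩, hmax⟩ := Finite.exists_le_maximal
    (p := fun B : G.Subgraph => B ≤ C ∧ SubTwoEC B)
    ⟨(SimpleGraph.singletonSubgraph_le_iff x C).2 hx, hx'⟩
  exact ⟨B, hBC, hB, fun B' hBB' hB'C hB' => (hmax ⟨hB'C, hB'⟩ hBB').antisymm hBB'⟩

lemma IsComponent.eq_of_mem (hC : IsComponent H C) (hD : IsComponent H D) {x : V}
    (hxC : x ∈ C.verts) (hxD : x ∈ D.verts) : C = D := by
  have hCD : (C ⊔ D).Connected :=
    Subgraph.connected_sup hC.2.1.preconnected hD.2.1.preconnected ⟨x, hxC, hxD⟩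
  exact (hC.2.2 _ le_sup_left (sup_le hC.1 hD.1) hCD).symm.trans
    (hD.2.2 _ le_sup_right (sup_le hC.1 hD.1) hCD)

lemma four_le_ncard_verts_of_four_le_ncard_edgeSet [Finite V] (h : 4 ≤ C.edgeSet.ncard) :
    4 ≤ C.verts.ncard := by
  by_contra! hlt
  have := C.ncard_edgeSet_le_choose_two.trans (Nat.choose_le_choose 2 (Nat.le_of_lt_succ hlt))
  rw [show Nat.choose 3 2 = 3 from rfl] at this
  omega

lemma IsCanonical.four_le_ncard_verts [Finite V] (hcan : IsCanonical H) (hC : IsComponent H C) :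
    4 ≤ C.verts.ncard := by
  by_cases hbr : HasBridge C
  · obtain ⟨x, hx⟩ := hC.2.1.nonempty
    obtain ⟨B, hB⟩ := exists_isBlock hx
    have hBedges : 4 ≤ B.edgeSet.ncard := by
      by_cases hpend : IsPendant C B
      · exact le_trans (by norm_num) ((hcan.2 C hC hbr B hB).1 hpend)
      · exact (hcan.2 C hC hbr B hB).2 hpend
    exact (four_le_ncard_verts_of_four_le_ncard_edgeSet hBedges).trans
      (Set.ncard_le_ncard hB.1.1)
  · rcases hcan.1 C hC hbr with ⟨i, hi, -, -, hCi, -⟩ | hedges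
    · exact hCi ▸ hi
    · exact four_le_ncard_verts_of_four_le_ncard_edgeSet (le_trans (by norm_num) hedges)

lemma not_reachable_induce_compl_of_cover [Finite V] (hsp : H.IsSpanning)
    {A B : {C : G.Subgraph // IsComponent H C}}
    (hAB : ¬ ((compGraph H).deleteEdges {s(A, B)}).Reachable A B) {T : Set V}
    (hT : ∀ a ∈ A.1.verts, ∀ b ∈ B.1.verts, G.Adj a b → a ∈ T ∨ b ∈ T)
    (x y : ↥Tᶜ) (hx : x.1 ∈ A.1.verts) (hy : y.1 ∈ B.1.verts) :
    ¬ (G.induce Tᶜ).Reachable x y := by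
  choose f hf using fun z : V => exists_isComponent_mem (hsp z)
  let node : V → {C : G.Subgraph // IsComponent H C} := fun z => ⟨f z, (hf z).1⟩
  have hnode : ∀ {z} {C : {C : G.Subgraph // IsComponent H C}}, z ∈ C.1.verts → node z = C :=
    fun {_ C} hz => Subtype.ext ((hf _).1.eq_of_mem C.2 (hf _).2 hz)
  have hmem : ∀ {z} {C : {C : G.Subgraph // IsComponent H C}}, node z = C → z ∈ C.1.verts :=
    fun h => h ▸ (hf _).2
  suffices hstep : ∀ a b : ↥Tᶜ, (G.induce Tᶜ).Adj a b →
      ((compGraph H).deleteEdges {s(A, B)}).Reachable (node a) (node b) by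
    intro hxy
    have := hxy.map_of_adj_reachable hstep
    rw [hnode hx, hnode hy] at this
    exact hAB this
  intro a b hab
  by_cases heq : node a.1 = node b.1
  · exact heq ▸ Reachable.refl _
  refine Adj.reachable ((deleteEdges_adj ..).2 ⟨⟨heq, a, b, (hf a).2, (hf b).2, hab⟩, ?_⟩)
  rw [Set.mem_singleton_iff, Sym2.eq_iff]
  rintro (⟨ha, hb⟩ | ⟨ha, hb⟩)
  · exact (hT a (hmem ha) b (hmem hb) hab).elim a.2 b.2
  · exact (hT b (hmem hb) a (hmem ha) hab.symm).elim b.2 a.2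

end Subgraph

end ECSS

theorem statement_9_general {V : Type*} [Fintype V] {G : SimpleGraph V}
    (h2vc : ECSS.TwoVertexConnected G)
    (hni : ∀ S : Set V, ¬ ECSS.IsNonIsolating2Cut G S)
    (H : G.Subgraph) (hcov : ECSS.IsTwoEdgeCover H) (hcan : ECSS.IsCanonical H)
    (A B : {C : G.Subgraph // ECSS.IsComponent H C})
    (hadj : (ECSS.compGraph H).Adj A B)
    (hA : ECSS.IsTrivialSegment (ECSS.compGraph H) A) :
    ECSS.HasMatchingBetween G A.1.verts B.1.verts 3 := by
  by_contra hno
  have hdisj : Disjoint A.1.verts B.1.verts := Set.disjoint_left.2 fun x hxA hxB =>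
    hadj.1 (Subtype.ext (A.2.eq_of_mem B.2 hxA hxB))
  obtain ⟨S, hS, hcover⟩ := ECSS.exists_cover_of_not_hasMatchingBetween hdisj hno
  have hA₄ := hcan.four_le_ncard_verts A.2
  have hB₄ := hcan.four_le_ncard_verts B.2
  obtain ⟨T, hST, -, hT⟩ := Set.exists_subsuperset_card_eq (Set.subset_univ S)
    (Nat.le_of_lt_succ hS) (by have := Set.ncard_le_ncard (Set.subset_univ A.1.verts); omega)
  have hsep := ECSS.not_reachable_induce_compl_of_cover hcov.1
    (hA.not_reachable_deleteEdges hadj)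
    fun a ha b hb hab => (hcover a ha b hb hab).imp (@hST a) (@hST b)
  refine hni T (ECSS.isNonIsolating2Cut_of_not_reachable h2vc.1 hT ?_ ?_ hsep)
  · have := Set.le_ncard_sdiff T A.1.verts
    omega
  · have := Set.le_ncard_sdiff T B.1.verts
    omega

/-- Let `G` be a 2-vertex-connected simple graph without irrelevant
edges and without non-isolating 2-vertex cuts, and let `H` be a bridgeless canonical
2-edge cover of `G`. Let `A` and `B` be adjacent nodes in the component graph `Ĝ_H`
such that `A` is a trivial segment. Then there exists a matching of size 3 between
`V(C_A)` and `V(C_B)` in `G`. -/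
theorem statement_9 {V : Type*} [Fintype V] [DecidableEq V] {G : SimpleGraph V}
    (h2vc : ECSS.TwoVertexConnected G)
    (hirr : ∀ x y : V, ¬ ECSS.IsIrrelevantEdge G x y)
    (hni : ∀ S : Set V, ¬ ECSS.IsNonIsolating2Cut G S)
    (H : G.Subgraph) (hcov : ECSS.IsTwoEdgeCover H) (hcan : ECSS.IsCanonical H)
    (hbl : ECSS.Bridgeless H)
    (A B : {C : G.Subgraph // ECSS.IsComponent H C})
    (hadj : (ECSS.compGraph H).Adj A B)
    (hA : ECSS.IsTrivialSegment (ECSS.compGraph H) A) :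
    ECSS.HasMatchingBetween G A.1.verts B.1.verts 3 :=
  statement_9_general h2vc hni H hcov hcan A B hadj hA
end

section
/- Let G be a 2-edge-connected graph, {u,v,w} a large 3-vertex cut of G, and (V1, V2) a partition of V(G) ∖ {u,v,w} into nonempty parts such that there are no edges of G between V1 and V2. Let H be a 2-edge-connected spanning subgraph of G, let G_i = G[V_i ∪ {u,v,w}] and H_i = H ∩ E(G_i) for i ∈ {1,2}. Then H_1 and H_2 are each of one of the types A, B1, B2, C1, C2, C3 with respect to {u,v,w}. -/
open SimpleGraph

open scoped Classical

/-! Contracting the 2-edge-connected components of any subgraph yields a forest: an edge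
between two super-nodes that is not a bridge of the contraction would lift to a non-bridge
of the subgraph and merge them. For a side `H[Vᵢ ∪ {u, v, w}]`, a super-node avoiding
`u, v, w` keeps all its `H`-edges, and 2-edge-connectivity of `H` gives it two edges
towards distinct super-nodes; so every leaf of the forest contains `u`, `v` or `w`.
A finite forest whose leaves lie among three terminals has one of the six shapes: every
component contains a terminal, a component with a single terminal is a single node, and
one with two terminals is the path between them. -/

namespace SimpleGraph

variable {N : Type*} {F : SimpleGraph N}

lemma Reachable.exists_adj_mem_not_mem {T : Set N} {a b : N} (h : F.Reachable a b)
    (ha : a ∈ T) (hb : b ∉ T) : ∃ x ∈ T, ∃ y ∉ T, F.Adj x y := by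
  obtain ⟨p⟩ := h
  obtain ⟨d, -, hd₁, hd₂⟩ := p.exists_boundary_dart T ha hb
  exact ⟨d.fst, hd₁, d.snd, hd₂, d.adj⟩

lemma exists_walk_forall_length_le [Finite N] {x : N} (P : ∀ {y}, F.Walk x y → Prop)
    (hnil : P (Walk.nil : F.Walk x x)) (hpath : ∀ {y} (q : F.Walk x y), P q → q.IsPath) :
    ∃ y, ∃ q : F.Walk x y, P q ∧ ∀ y', ∀ q' : F.Walk x y', P q' → q'.length ≤ q.length := by
  have := Fintype.ofFinite N
  set L := {l | ∃ y, ∃ q : F.Walk x y, P q ∧ q.length = l}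
  have hbdd : BddAbove L := by
    refine ⟨Fintype.card N, ?_⟩
    rintro _ ⟨y, q, hq, rfl⟩
    exact (hpath q hq).length_lt.le
  obtain ⟨y, q, hq, hlen⟩ := Nat.sSup_mem (s := L) ⟨0, x, Walk.nil, hnil, rfl⟩ hbdd
  exact ⟨y, q, hq, fun y' q' hq' => hlen ▸ le_csSup hbdd ⟨y', q', hq', rfl⟩⟩

namespace IsAcyclic

/-- Every edge of a forest is a bridge, and `p` contains a walk from `P` to `Q`. -/
lemma mem_edges_of_mem_support (hF : F.IsAcyclic) {α β P Q : N} (p : F.Walk α β)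
    (hPQ : F.Adj P Q) (hP : P ∈ p.support) (hQ : Q ∈ p.support) : s(P, Q) ∈ p.edges := by
  have := isBridge_iff_forall_walk_mem_edges.mp (isAcyclic_iff_forall_adj_isBridge.mp hF hPQ)
    ((p.takeUntil P hP).reverse.append (p.takeUntil Q hQ))
  rw [Walk.edges_append, List.mem_append, Walk.edges_reverse, List.mem_reverse] at this
  exact this.elim (p.edges_takeUntil_subset_edges hP ·) (p.edges_takeUntil_subset_edges hQ ·)

lemma mem_edges_of_forall_adj (hF : F.IsAcyclic) {α β : N} {p : F.Walk α β}
    (hp : ∀ P Q, F.Adj P Q → P ∈ p.support) : ∀ e ∈ F.edgeSet, e ∈ p.edges := by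
  rintro ⟨P, Q⟩ (h : F.Adj P Q)
  exact hF.mem_edges_of_mem_support p h (hp P Q h) (hp Q P h.symm)

variable [Finite N] (hF : F.IsAcyclic)
include hF

/-- Extending a path as long as possible ends at a leaf, since in a forest the only
neighbour of the endpoint lying on the path is its predecessor. -/
lemma exists_subsingleton_neighborSet_isPath_append {x n : N} (r : F.Walk x n)
    (hr : r.IsPath) :
    ∃ y, (F.neighborSet y).Subsingleton ∧ ∃ q : F.Walk n y, (r.append q).IsPath := by
  obtain ⟨y, q, hq, hmax⟩ := exists_walk_forall_length_le (fun q => (r.append q).IsPath)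
    (by simpa using hr) (fun q hq => hq.of_append_right)
  have hmem : ∀ t, F.Adj y t → t ∈ (r.append q).support := by
    intro t ht
    by_contra hts
    have := hmax _ (q.concat ht) (by simpa [Walk.append_concat] using hq.concat hts ht)
    simp at this
  exact ⟨y, fun t ht t' ht' => (hF.eq_penultimate_of_adj_end hq ht (hmem t ht)).trans
    (hF.eq_penultimate_of_adj_end hq ht' (hmem t' ht')).symm, q, hq⟩

lemma eq_of_reachable {s : N}
    (hleaf : ∀ y, F.Reachable s y → (F.neighborSet y).Subsingleton → y = s)
    {n : N} (hn : F.Reachable s n) : n = s := by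
  by_contra hns
  obtain ⟨p⟩ := hn
  cases p with
  | nil => exact hns rfl
  | cons h _ =>
    obtain ⟨y, hy, q, hq⟩ :=
      hF.exists_subsingleton_neighborSet_isPath_append (Walk.cons h .nil) (by simpa using h.ne)
    obtain rfl := hleaf y ⟨(Walk.cons h .nil).append q⟩ hy
    simp at hq

lemma mem_support_of_reachable {α β : N} {p : F.Walk α β} (hp : p.IsPath)
    (hleaf : ∀ y, F.Reachable α y → (F.neighborSet y).Subsingleton → y ∈ p.support)
    {n : N} (hn : F.Reachable α n) : n ∈ p.support := by
  obtain ⟨r, hr⟩ := hn.exists_isPath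
  obtain ⟨y, hy, q, hrq⟩ := hF.exists_subsingleton_neighborSet_isPath_append r hr
  have hyp := hleaf y ⟨r.append q⟩ hy
  have heq : r.append q = p.takeUntil y hyp :=
    congrArg Subtype.val ((hF.subsingleton_path _ _).elim ⟨_, hrq⟩ ⟨_, hp.takeUntil hyp⟩)
  refine p.support_takeUntil_subset_support hyp ?_
  rw [← heq]
  exact Walk.support_subset_support_append_left r q r.end_mem_support

variable {S : Set N} (hS : ∀ n, (F.neighborSet n).Subsingleton → n ∈ S)
include hS

lemma exists_mem_reachable (x : N) : ∃ s ∈ S, F.Reachable x s := by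
  obtain ⟨y, hy, q, -⟩ := hF.exists_subsingleton_neighborSet_isPath_append Walk.nil .nil
  exact ⟨y, hS y hy, ⟨q⟩⟩

lemma eq_of_reachable_of_mem {s : N} (hs : ∀ t ∈ S, F.Reachable s t → t = s) {n : N}
    (hn : F.Reachable s n) : n = s :=
  hF.eq_of_reachable (fun y hy hleaf => hs y (hS y hleaf) hy) hn

lemma exists_isPath_of_mem {α β : N} (hαβ : F.Reachable α β)
    (hs : ∀ t ∈ S, F.Reachable α t → t = α ∨ t = β) :
    ∃ p : F.Walk α β, p.IsPath ∧ ∀ n, F.Reachable α n → n ∈ p.support := by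
  obtain ⟨p, hp⟩ := hαβ.exists_isPath
  refine ⟨p, hp, fun n hn => hF.mem_support_of_reachable hp (fun y hy hleaf => ?_) hn⟩
  rcases hs y (hS y hleaf) hy with rfl | rfl
  exacts [p.start_mem_support, p.end_mem_support]

end IsAcyclic

lemma Subgraph.Connected.reachable_spanningCoe {G : SimpleGraph N} {K : G.Subgraph}
    (hK : K.Connected) {x y : N} (hx : x ∈ K.verts) (hy : y ∈ K.verts) :
    K.spanningCoe.Reachable x y :=
  (hK ⟨x, hx⟩ ⟨y, hy⟩).map ⟨Subtype.val, id⟩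

end SimpleGraph

namespace ECSS

variable {V : Type*} {G : SimpleGraph V}

section Contraction

variable {K : G.Subgraph}

def SNode.supp (n : SNode K) : Set V :=
  {p | ∃ hp : p ∈ K.verts, cls K ⟨p, hp⟩ = n}

lemma SameTwoEC.of_adj_of_reachable_deleteEdges {x y : V} (hxy : K.Adj x y)
    (h : (K.deleteEdges {s(x, y)}).spanningCoe.Reachable x y) : SameTwoEC K x y := by
  refine ⟨(show K.spanningCoe.Adj x y from hxy).reachable, fun e _ => ?_⟩
  by_cases he : e = s(x, y)
  · exact he ▸ h
  · exact Adj.reachable (show (K.deleteEdges {e}).Adj x y from ⟨hxy, Ne.symm he⟩)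

lemma reachable_deleteEdges_of_cls_eq {x y : K.verts} (h : cls K x = cls K y) {e : Sym2 V}
    (he : e ∈ K.edgeSet) : (K.deleteEdges {e}).spanningCoe.Reachable x y :=
  (Quotient.exact h).2 e he

lemma contractTwoEC_adj_cls {x y : K.verts} (hxy : K.Adj x y) (hne : cls K x ≠ cls K y) :
    (contractTwoEC K).Adj (cls K x) (cls K y) :=
  ⟨hne, x, y, rfl, rfl, hxy⟩

/-- The walk lifts step by step because each super-node stays connected in `K - xy`. -/
lemma reachable_deleteEdges_of_reachable_contractTwoEC {x y : K.verts} (hxy : K.Adj x y)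
    {P Q : SNode K}
    (hPQ : ((contractTwoEC K).deleteEdges {s(cls K x, cls K y)}).Reachable P Q)
    (x' y' : K.verts) (hx' : cls K x' = P) (hy' : cls K y' = Q) :
    (K.deleteEdges {s(x.1, y.1)}).spanningCoe.Reachable x' y' := by
  have he : s(x.1, y.1) ∈ K.edgeSet := hxy
  obtain ⟨W⟩ := hPQ
  induction W generalizing x' with
  | nil => exact reachable_deleteEdges_of_cls_eq (hx'.trans hy'.symm) he
  | cons h _ ih =>
    rw [deleteEdges_adj, Set.mem_singleton_iff] at h
    obtain ⟨⟨-, x₁, y₁, hx₁, hy₁, hK⟩, hnot⟩ := h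
    have hstep : (K.deleteEdges {s(x.1, y.1)}).spanningCoe.Adj x₁ y₁ := by
      refine ⟨hK, fun hcon => hnot ?_⟩
      rw [← hx₁, ← hy₁]
      rcases Sym2.eq_iff.mp (Set.mem_singleton_iff.mp hcon) with ⟨h1, h2⟩ | ⟨h1, h2⟩
      · rw [Subtype.ext h1, Subtype.ext h2]; rfl
      · rw [Subtype.ext h1, Subtype.ext h2]; exact Sym2.eq_swap
    exact (reachable_deleteEdges_of_cls_eq (hx'.trans hx₁.symm) he).trans
      (hstep.reachable.trans (ih y₁ hy₁ hy'))

theorem contractTwoEC_isAcyclic : (contractTwoEC K).IsAcyclic := by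
  rw [isAcyclic_iff_forall_adj_isBridge]
  rintro P Q ⟨hne, x, y, rfl, rfl, hxy⟩
  exact fun hr => hne (Quotient.sound (SameTwoEC.of_adj_of_reachable_deleteEdges hxy
    (reachable_deleteEdges_of_reachable_contractTwoEC hxy hr x y rfl rfl)))

end Contraction

/-- `H` has an edge `x₀y₀` leaving `n`, and as `H - x₀y₀` is connected, a second edge
`x₁y₁` leaving `n`. If both led to the same super-node, `x₀` and `y₀` would stay connected
in `K - x₀y₀`, putting `y₀` into `n`. -/
theorem not_subsingleton_neighborSet {H K : G.Subgraph} (hH : IsTwoECSS G H)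
    (n : SNode K) (hK : ∀ p ∈ n.supp, ∀ q, H.Adj p q → K.Adj p q) {z : V}
    (hz : z ∉ n.supp) : ¬ ((contractTwoEC K).neighborSet n).Subsingleton := by
  intro hleaf
  obtain ⟨hsp, hconn, h2ec⟩ := hH
  have hnbr : ∀ x ∈ n.supp, ∀ y ∉ n.supp, ∀ hy : y ∈ K.verts, H.Adj x y →
      (contractTwoEC K).Adj n (cls K ⟨y, hy⟩) := by
    rintro x ⟨hxK, rfl⟩ y hyn hy hxy
    exact contractTwoEC_adj_cls (hK x ⟨hxK, rfl⟩ y hxy) (fun h => hyn ⟨hy, h.symm⟩)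
  obtain ⟨z₀, hz₀⟩ := Quotient.exists_rep n
  obtain ⟨x₀, hx₀, y₀, hy₀, hH₀⟩ :=
    (hconn.reachable_spanningCoe (hsp z₀) (hsp z)).exists_adj_mem_not_mem (T := n.supp)
      ⟨z₀.2, hz₀⟩ hz
  have hK₀ : K.Adj x₀ y₀ := hK x₀ hx₀ y₀ hH₀
  obtain ⟨x₁, hx₁, y₁, hy₁, hH₁, hne₁⟩ :=
    ((h2ec s(x₀, y₀) hH₀).reachable_spanningCoe (hsp x₀) (hsp y₀)).exists_adj_mem_not_mem hx₀ hy₀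
  have hK₁ : (K.deleteEdges {s(x₀, y₀)}).spanningCoe.Adj x₁ y₁ := ⟨hK x₁ hx₁ y₁ hH₁, hne₁⟩
  have hy : cls K ⟨y₁, hK₁.1.snd_mem⟩ = cls K ⟨y₀, hK₀.snd_mem⟩ :=
    hleaf (hnbr x₁ hx₁ y₁ hy₁ _ hH₁) (hnbr x₀ hx₀ y₀ hy₀ _ hH₀)
  obtain ⟨hx₀K, hx₀n⟩ := hx₀
  obtain ⟨hx₁K, hx₁n⟩ := hx₁
  have hreach : (K.deleteEdges {s(x₀, y₀)}).spanningCoe.Reachable x₀ y₀ :=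
    (reachable_deleteEdges_of_cls_eq (x := ⟨x₀, hx₀K⟩) (y := ⟨x₁, hx₁K⟩)
      (hx₀n.trans hx₁n.symm) hK₀).trans
      (hK₁.reachable.trans (reachable_deleteEdges_of_cls_eq hy hK₀))
  exact hy₀ ⟨hK₀.snd_mem,
    (Quotient.sound (SameTwoEC.of_adj_of_reachable_deleteEdges hK₀ hreach)).symm.trans hx₀n⟩

section Shapes

variable {K : G.Subgraph} [Finite (SNode K)] {u v w : K.verts}
  (hF : (contractTwoEC K).IsAcyclic)
  (hS : ∀ n, ((contractTwoEC K).neighborSet n).Subsingleton →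
    n ∈ ({cls K u, cls K v, cls K w} : Set (SNode K)))
include hF hS

lemma typeB1_of_forall_reachable {α β : SNode K}
    (hconn : ∀ n, (contractTwoEC K).Reachable α n) (hαβ : α ≠ β)
    (hset : ({cls K u, cls K v, cls K w} : Set (SNode K)) = {α, β}) :
    TypeB1 K u v w := by
  rw [hset] at hS
  obtain ⟨p, hp, hsupp⟩ := hF.exists_isPath_of_mem hS (hconn β) (fun t ht _ => by simpa using ht)
  have hlen : 1 ≤ p.length := Nat.pos_of_ne_zero fun h => hαβ (Walk.eq_of_length_eq_zero h)
  refine ⟨α, β, ⟨p, hp, hlen, fun n => hsupp n (hconn n),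
    hF.mem_edges_of_forall_adj fun P _ _ => hsupp P (hconn P)⟩, ?_⟩
  simp only [Set.ext_iff, Set.mem_insert_iff, Set.mem_singleton_iff] at hset
  have := hset (cls K u); have := hset (cls K v); have := hset (cls K w)
  have := hset α; have := hset β
  grind

lemma ofAnyType_of_reachable (hab : (contractTwoEC K).Reachable (cls K u) (cls K v))
    (hac : (contractTwoEC K).Reachable (cls K u) (cls K w)) : OfAnyType K u v w := by
  have hconn : ∀ n, (contractTwoEC K).Reachable (cls K u) n := fun n => by
    obtain ⟨t, ht, hnt⟩ := hF.exists_mem_reachable hS n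
    simp only [Set.mem_insert_iff, Set.mem_singleton_iff] at ht
    rcases ht with rfl | rfl | rfl
    exacts [hnt.symm, hab.trans hnt.symm, hac.trans hnt.symm]
  by_cases h1 : cls K u = cls K v
  · by_cases h2 : cls K u = cls K w
    · refine Or.inl fun n => hF.eq_of_reachable_of_mem hS (fun t ht _ => ?_) (hconn n)
      simp only [Set.mem_insert_iff, Set.mem_singleton_iff] at ht
      rcases ht with rfl | rfl | rfl
      exacts [rfl, h1.symm, h2.symm]
    · exact .inr <| .inl <| typeB1_of_forall_reachable hF hS hconn h2 (by rw [← h1]; simp)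
  · by_cases h2 : cls K u = cls K w
    · exact .inr <| .inl <| typeB1_of_forall_reachable hF hS hconn h1
        (by rw [← h2, Set.pair_comm]; simp)
    · by_cases h3 : cls K v = cls K w
      · exact .inr <| .inl <| typeB1_of_forall_reachable hF hS hconn h1 (by rw [← h3]; simp)
      · exact .inr <| .inr <| .inr <| .inl
          ⟨⟨(connected_iff_exists_forall_reachable _).mpr ⟨_, hconn⟩, hF⟩, h1, h2, h3⟩

section Pair

variable {x y z : SNode K} (hset : ({cls K u, cls K v, cls K w} : Set (SNode K)) = {x, y, z})
  (hxy : (contractTwoEC K).Reachable x y) (hxz : ¬ (contractTwoEC K).Reachable x z)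
include hset hxy hxz

lemma eq_of_reachable_of_not_reachable {n : SNode K} (hn : (contractTwoEC K).Reachable z n) :
    n = z := by
  refine hF.eq_of_reachable_of_mem (hset ▸ hS) (fun t ht hzt => ?_) hn
  simp only [Set.mem_insert_iff, Set.mem_singleton_iff] at ht
  rcases ht with rfl | rfl | rfl
  exacts [absurd hzt.symm hxz, absurd (hxy.trans hzt.symm) hxz, rfl]

lemma reachable_or_eq_of_not_reachable (n : SNode K) :
    (contractTwoEC K).Reachable x n ∨ n = z := by
  obtain ⟨t, ht, hnt⟩ := hF.exists_mem_reachable (hset ▸ hS) n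
  simp only [Set.mem_insert_iff, Set.mem_singleton_iff] at ht
  rcases ht with rfl | rfl | rfl
  exacts [.inl hnt.symm, .inl (hxy.trans hnt.symm),
    .inr (eq_of_reachable_of_not_reachable hF hS hset hxy hxz hnt.symm)]

lemma typeC2_of_reachable_of_not_reachable (hne : x ≠ y) : TypeC2 K u v w := by
  obtain ⟨p, hp, hsupp⟩ := hF.exists_isPath_of_mem (hset ▸ hS) hxy fun t ht hxt => by
    simp only [Set.mem_insert_iff, Set.mem_singleton_iff] at ht
    rcases ht with rfl | rfl | rfl
    exacts [.inl rfl, .inr rfl, absurd hxt hxz]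
  have hmem : ∀ n, n ∈ p.support ∨ n = z := fun n =>
    (reachable_or_eq_of_not_reachable hF hS hset hxy hxz n).imp_left (hsupp n)
  have hlen : 1 ≤ p.length := Nat.pos_of_ne_zero fun h => hne (Walk.eq_of_length_eq_zero h)
  refine ⟨x, y, z, ⟨p, hp, hlen, fun h => hxz ⟨p.takeUntil z h⟩, hmem,
    hF.mem_edges_of_forall_adj fun P Q h => (hmem P).resolve_right ?_⟩, ?_⟩
  · rintro rfl
    exact h.ne (eq_of_reachable_of_not_reachable hF hS hset hxy hxz h.reachable).symm
  have hxz' : x ≠ z := fun h => hxz (h ▸ .rfl)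
  have hyz' : y ≠ z := fun h => hxz (h ▸ hxy)
  simp only [Set.ext_iff, Set.mem_insert_iff, Set.mem_singleton_iff] at hset
  have := hset (cls K u); have := hset (cls K v); have := hset (cls K w)
  have := hset x; have := hset y; have := hset z
  refine ⟨?_, ?_, ?_, ?_⟩ <;> grind

end Pair

lemma typeB2_of_not_reachable {x z : SNode K}
    (hset : ({cls K u, cls K v, cls K w} : Set (SNode K)) = {x, x, z})
    (hxz : ¬ (contractTwoEC K).Reachable x z) : TypeB2 K u v w := by
  have hcover := reachable_or_eq_of_not_reachable hF hS hset .rfl hxz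
  have hx : ∀ n, (contractTwoEC K).Reachable x n → n = x := fun n =>
    hF.eq_of_reachable_of_mem (hset ▸ hS) fun t ht hxt => by
      simp only [Set.mem_insert_iff, Set.mem_singleton_iff] at ht
      rcases ht with rfl | rfl | rfl
      exacts [rfl, rfl, absurd hxt hxz]
  have hxz' : x ≠ z := fun h => hxz (h ▸ .rfl)
  refine ⟨x, z, hxz', fun n => (hcover n).imp_left (hx n), fun P Q h => ?_, ?_⟩
  · rcases hcover P with hP | rfl
    · exact h.ne ((hx Q (hP.trans h.reachable)).trans (hx P hP).symm).symm
    · exact h.ne (eq_of_reachable_of_not_reachable hF hS hset .rfl hxz h.reachable).symm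
  · simp only [Set.ext_iff, Set.mem_insert_iff, Set.mem_singleton_iff] at hset
    have := hset x; have := hset z
    grind

lemma ofAnyType_of_reachable_of_not_reachable {x y z : SNode K}
    (hset : ({cls K u, cls K v, cls K w} : Set (SNode K)) = {x, y, z})
    (hxy : (contractTwoEC K).Reachable x y) (hxz : ¬ (contractTwoEC K).Reachable x z) :
    OfAnyType K u v w := by
  by_cases hne : x = y
  · subst hne
    exact .inr <| .inr <| .inl <| typeB2_of_not_reachable hF hS hset hxz
  · exact .inr <| .inr <| .inr <| .inr <| .inl <|
      typeC2_of_reachable_of_not_reachable hF hS hset hxy hxz hne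

lemma typeC3_of_not_reachable (hab : ¬ (contractTwoEC K).Reachable (cls K u) (cls K v))
    (hac : ¬ (contractTwoEC K).Reachable (cls K u) (cls K w))
    (hbc : ¬ (contractTwoEC K).Reachable (cls K v) (cls K w)) : TypeC3 K u v w := by
  have hsing : ∀ s ∈ ({cls K u, cls K v, cls K w} : Set (SNode K)), ∀ n,
      (contractTwoEC K).Reachable s n → n = s := by
    refine fun s hs n => hF.eq_of_reachable_of_mem hS fun t ht hst => ?_
    simp only [Set.mem_insert_iff, Set.mem_singleton_iff] at hs ht
    rcases hs with rfl | rfl | rfl <;> rcases ht with rfl | rfl | rfl <;>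
      first | rfl | exact absurd hst ‹_› | exact absurd hst.symm ‹_›
  have hcover : ∀ n, n ∈ ({cls K u, cls K v, cls K w} : Set (SNode K)) := fun n => by
    obtain ⟨t, ht, hnt⟩ := hF.exists_mem_reachable hS n
    rwa [hsing t ht n hnt.symm]
  exact ⟨fun h => hab (h ▸ .rfl), fun h => hac (h ▸ .rfl), fun h => hbc (h ▸ .rfl),
    fun n => by simpa using hcover n, fun P Q h => h.ne (hsing P (hcover P) Q h.reachable).symm⟩

theorem ofAnyType_of_isAcyclic : OfAnyType K u v w := by
  by_cases hab : (contractTwoEC K).Reachable (cls K u) (cls K v)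
  · by_cases hac : (contractTwoEC K).Reachable (cls K u) (cls K w)
    · exact ofAnyType_of_reachable hF hS hab hac
    · exact ofAnyType_of_reachable_of_not_reachable hF hS rfl hab hac
  by_cases hac : (contractTwoEC K).Reachable (cls K u) (cls K w)
  · exact ofAnyType_of_reachable_of_not_reachable hF hS (Set.pair_comm _ _ ▸ rfl) hac hab
  by_cases hbc : (contractTwoEC K).Reachable (cls K v) (cls K w)
  · refine ofAnyType_of_reachable_of_not_reachable (z := cls K u) hF hS ?_ hbc (hab ·.symm)
    ext
    simp only [Set.mem_insert_iff, Set.mem_singleton_iff]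
    tauto
  exact .inr <| .inr <| .inr <| .inr <| .inr <| typeC3_of_not_reachable hF hS hab hac hbc

end Shapes

instance {K : G.Subgraph} [Finite K.verts] : Finite (SNode K) :=
  Quotient.finite _

theorem ofAnyType_induce [Finite V] {H : G.Subgraph} (hH : IsTwoECSS G H) {A : Set V}
    {u v w : V} (hA : ∀ p ∈ A, ∀ q, H.Adj p q → q ∈ A ∪ {u, v, w}) :
    OfAnyType (H.induce (A ∪ {u, v, w})) ⟨u, by simp⟩ ⟨v, by simp⟩ ⟨w, by simp⟩ := by
  refine ofAnyType_of_isAcyclic contractTwoEC_isAcyclic fun n hn => ?_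
  by_contra hnS
  have hsupp : ∀ p ∈ n.supp, p ∈ A := by
    rintro p ⟨hp | hp, rfl⟩
    · exact hp
    · simp only [Set.mem_insert_iff, Set.mem_singleton_iff] at hp
      rcases hp with rfl | rfl | rfl <;> simp at hnS
  refine not_subsingleton_neighborSet hH n
    (fun p hp q h => ⟨.inl (hsupp p hp), hA p (hsupp p hp) q h, h⟩) (z := u) ?_ hn
  rintro ⟨hu, rfl⟩
  simp at hnS

lemma mem_union_of_adj {A B S : Set V} (hAB : A ∪ B = Sᶜ)
    (hno : ∀ a ∈ A, ∀ b ∈ B, ¬ G.Adj a b) {p q : V} (hp : p ∈ A) (hpq : G.Adj p q) :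
    q ∈ A ∪ S := by
  by_cases hq : q ∈ S
  · exact .inr hq
  · rcases (hAB ▸ hq : q ∈ A ∪ B) with hq | hq
    exacts [.inl hq, absurd hpq (hno p hp q hq)]

end ECSS

/-- Let `G` be 2-edge-connected, `{u,v,w}` a large 3-vertex cut of `G`,
and `(V1, V2)` a partition of `V(G) ∖ {u,v,w}` into nonempty parts with no edges of
`G` between `V1` and `V2`. Let `H` be a 2-edge-connected spanning subgraph of `G`,
`G_i = G[V_i ∪ {u,v,w}]` and `H_i = H ∩ E(G_i)`. Then `H_1` and `H_2` are each of one
of the types `A, B1, B2, C1, C2, C3` with respect to `{u,v,w}`. -/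
theorem statement_14 {V : Type*} [Fintype V] (G : SimpleGraph V)
    (u v w : V)
    (V1 V2 : Set V) (hunion : V1 ∪ V2 = ({u, v, w} : Set V)ᶜ)
    (hnoedge : ∀ a ∈ V1, ∀ b ∈ V2, ¬ G.Adj a b)
    (H : G.Subgraph) (hH : ECSS.IsTwoECSS G H) :
    ECSS.OfAnyType (H.induce (V1 ∪ {u, v, w}))
        ⟨u, by simp⟩ ⟨v, by simp⟩ ⟨w, by simp⟩ ∧
      ECSS.OfAnyType (H.induce (V2 ∪ {u, v, w}))
        ⟨u, by simp⟩ ⟨v, by simp⟩ ⟨w, by simp⟩ :=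
  ⟨ECSS.ofAnyType_induce hH fun _ hp _ h =>
      ECSS.mem_union_of_adj hunion hnoedge hp (H.adj_sub h),
    ECSS.ofAnyType_induce hH fun _ hp _ h =>
      ECSS.mem_union_of_adj (Set.union_comm V1 V2 ▸ hunion)
        (fun a ha b hb hab => hnoedge b hb a ha hab.symm) hp (H.adj_sub h)⟩
end
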